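/- arXiv:0902.4369 — 2 statements merged into one kernel-verified Lean document; each statement's English description precedes it below -/
import Mathlib

section
/- The density of the random variable U = X|Y|^{1/2}, where X is standard normal independent of |Y| having density 2(y+z) marginalized appropriately, equals (2/π) ∫₀^∞ exp(−u²/(2v²) − v⁴/2) dv. Equivalently, (1/π)∫₀^∞∫₀^∞ ((y+z)/√y) exp(−u²/(2y) − (y+z)²/2) dy dz = (2/π)∫₀^∞ exp(−u²/(2v²) − v⁴/2) dv for every real u. -/
/-!
Substituting `y = v²` turns the inner integral into `∫₀^∞ 2 (v² + z) e^{-u²/(2v²) - (v² + z)²/2} dv`.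
This integrand is nonnegative, so the order of integration may be swapped (Tonelli), and for fixed `v`
the `z`-integral is elementary: `(v² + z) e^{-(v² + z)²/2}` is the derivative of `-e^{-(v² + z)²/2}`,
so it integrates to `e^{-v⁴/2}`.
-/

open MeasureTheory Set Filter Topology Real

theorem hasDerivAt_neg_exp_neg_add_sq_div_two (a x : ℝ) :
    HasDerivAt (fun z => -exp (-(a + z) ^ 2 / 2)) ((a + x) * exp (-(a + x) ^ 2 / 2)) x := by
  have h : HasDerivAt (fun z : ℝ => -(a + z) ^ 2 / 2) (-(a + x)) x := by
    refine ((((hasDerivAt_id x).const_add a).pow 2).neg.div_const 2).congr_deriv ?_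
    simp only [id, Nat.cast_ofNat, Nat.add_one_sub_one, pow_one, mul_one]
    ring
  exact h.exp.neg.congr_deriv (by ring)

theorem tendsto_neg_exp_neg_add_sq_div_two (a : ℝ) :
    Tendsto (fun z => -exp (-(a + z) ^ 2 / 2)) atTop (𝓝 0) := by
  have h : Tendsto (fun z : ℝ => -(a + z) ^ 2 / 2) atTop atBot := by
    simp_rw [neg_div]
    exact tendsto_neg_atTop_atBot.comp <|
      ((tendsto_pow_atTop two_ne_zero).comp (tendsto_atTop_add_const_left atTop a tendsto_id))
        |>.atTop_div_const two_pos
  simpa using (tendsto_exp_atBot.comp h).neg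

theorem add_mul_exp_neg_add_sq_div_two_nonneg {a z : ℝ} (ha : 0 ≤ a) (hz : 0 ≤ z) :
    0 ≤ (a + z) * exp (-(a + z) ^ 2 / 2) :=
  mul_nonneg (add_nonneg ha hz) (exp_pos _).le

theorem integrableOn_Ioi_add_mul_exp_neg_add_sq_div_two {a : ℝ} (ha : 0 ≤ a) :
    IntegrableOn (fun z => (a + z) * exp (-(a + z) ^ 2 / 2)) (Ioi 0) :=
  integrableOn_Ioi_deriv_of_nonneg' (fun x _ => hasDerivAt_neg_exp_neg_add_sq_div_two a x)
    (fun _ hz => add_mul_exp_neg_add_sq_div_two_nonneg ha (le_of_lt hz))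
    (tendsto_neg_exp_neg_add_sq_div_two a)

theorem integral_Ioi_add_mul_exp_neg_add_sq_div_two {a : ℝ} (ha : 0 ≤ a) :
    ∫ z in Ioi 0, (a + z) * exp (-(a + z) ^ 2 / 2) = exp (-a ^ 2 / 2) := by
  rw [integral_Ioi_of_hasDerivAt_of_nonneg' (fun x _ => hasDerivAt_neg_exp_neg_add_sq_div_two a x)
    (fun _ hz => add_mul_exp_neg_add_sq_div_two_nonneg ha (le_of_lt hz))
    (tendsto_neg_exp_neg_add_sq_div_two a)]
  simp

theorem integral_Ioi_div_sqrt (f : ℝ → ℝ) :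
    ∫ y in Ioi 0, f y / √y = ∫ v in Ioi 0, 2 * f (v ^ 2) := by
  rw [← integral_comp_rpow_Ioi _ two_ne_zero]
  refine setIntegral_congr_fun measurableSet_Ioi fun v (hv : 0 < v) => ?_
  rw [smul_eq_mul, abs_two, rpow_two, sqrt_sq hv.le, show (2:ℝ) - 1 = 1 by norm_num, rpow_one]
  field_simp

theorem integrable_exp_neg_div_sq_sub_pow_four_div_two (u : ℝ) :
    Integrable fun v : ℝ => exp (-u ^ 2 / (2 * v ^ 2) - v ^ 4 / 2) := by
  refine ((integrable_exp_neg_mul_sq (by norm_num : (0:ℝ) < 1 / 2)).const_mul (exp (1 / 2))).mono'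
    (by fun_prop) (Eventually.of_forall fun v => ?_)
  have hu : -u ^ 2 / (2 * v ^ 2) ≤ 0 :=
    div_nonpos_of_nonpos_of_nonneg (neg_nonpos.mpr (sq_nonneg u)) (by positivity)
  rw [norm_of_nonneg (exp_pos _).le, ← exp_add]
  -- `v⁴/2 ≥ v²/2 - 1/2` since `(v² - 1)² ≥ 0`
  exact exp_le_exp.mpr (by nlinarith [sq_nonneg (v ^ 2 - 1)])

noncomputable def dobrushinIntegrand (u v z : ℝ) : ℝ :=
  2 * exp (-u ^ 2 / (2 * v ^ 2)) * ((v ^ 2 + z) * exp (-(v ^ 2 + z) ^ 2 / 2))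

theorem integral_Ioi_eq_integral_Ioi_dobrushinIntegrand (u z : ℝ) :
    ∫ y in Ioi 0, ((y + z) / √y) * exp (-u ^ 2 / (2 * y) - (y + z) ^ 2 / 2)
      = ∫ v in Ioi 0, dobrushinIntegrand u v z := by
  simp_rw [div_mul_eq_mul_div, integral_Ioi_div_sqrt, dobrushinIntegrand, sub_eq_add_neg, exp_add,
    ← neg_div]
  congr 1 with v
  ring

theorem integral_Ioi_dobrushinIntegrand (u v : ℝ) :
    ∫ z in Ioi 0, dobrushinIntegrand u v z = 2 * exp (-u ^ 2 / (2 * v ^ 2) - v ^ 4 / 2) := by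
  simp_rw [dobrushinIntegrand, integral_const_mul,
    integral_Ioi_add_mul_exp_neg_add_sq_div_two (sq_nonneg v), sub_eq_add_neg, exp_add, ← neg_div]
  ring_nf

theorem integrable_dobrushinIntegrand (u : ℝ) :
    Integrable (Function.uncurry (dobrushinIntegrand u))
      ((volume.restrict (Ioi 0)).prod (volume.restrict (Ioi 0))) := by
  have hmeas : AEStronglyMeasurable (Function.uncurry (dobrushinIntegrand u))
      ((volume.restrict (Ioi 0)).prod (volume.restrict (Ioi 0))) := by
    unfold dobrushinIntegrand Function.uncurry
    fun_prop
  refine (integrable_prod_iff hmeas).mpr ⟨Eventually.of_forall fun v => ?_, ?_⟩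
  · exact (integrableOn_Ioi_add_mul_exp_neg_add_sq_div_two (sq_nonneg v)).const_mul
      (2 * exp (-u ^ 2 / (2 * v ^ 2)))
  · refine (((integrable_exp_neg_div_sq_sub_pow_four_div_two u).const_mul 2).integrableOn).congr
      (Eventually.of_forall fun v => ?_)
    dsimp only
    rw [← integral_Ioi_dobrushinIntegrand]
    refine setIntegral_congr_fun measurableSet_Ioi fun z (hz : 0 < z) => ?_
    refine (norm_of_nonneg (mul_nonneg (by positivity) ?_)).symm
    exact add_mul_exp_neg_add_sq_div_two_nonneg (sq_nonneg v) hz.le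

/-- Dobrushin's formula: for every real `u`,
`(1/π) ∫₀^∞ ∫₀^∞ ((y+z)/√y) exp(−u²/(2y) − (y+z)²/2) dy dz
  = (2/π) ∫₀^∞ exp(−u²/(2v²) − v⁴/2) dv`. -/
theorem stmt2 (u : ℝ) :
    (1 / Real.pi) * ∫ z in Set.Ioi (0:ℝ), ∫ y in Set.Ioi (0:ℝ),
        ((y + z) / Real.sqrt y) * Real.exp (-u^2 / (2*y) - (y+z)^2 / 2)
      = (2 / Real.pi) * ∫ v in Set.Ioi (0:ℝ),
          Real.exp (-u^2 / (2*v^2) - v^4 / 2) := by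
  calc _ = (1 / π) * ∫ z in Ioi 0, ∫ v in Ioi 0, dobrushinIntegrand u v z := by
        simp_rw [integral_Ioi_eq_integral_Ioi_dobrushinIntegrand]
    _ = (1 / π) * ∫ v in Ioi 0, ∫ z in Ioi 0, dobrushinIntegrand u v z := by
        rw [integral_integral_swap (integrable_dobrushinIntegrand u)]
    _ = (1 / π) * ∫ v in Ioi 0, 2 * exp (-u ^ 2 / (2 * v ^ 2) - v ^ 4 / 2) := by
        simp_rw [integral_Ioi_dobrushinIntegrand]
    _ = _ := by
        rw [integral_const_mul]
        ring
end

section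
/- Let h, ℓ : [0,1] → ℝ be absolutely continuous with ℓ(0)=0 and h(x) = max_{0≤u≤x} ℓ(u). Then h'(x)·(h(x) − ℓ(x)) = 0 a.e. and ∫₀¹((h'(x) − ℓ'(x))² + h'(x)²) dx = ∫₀¹ ℓ'(x)² dx. -/
/-!
Where `ℓ < h`, continuity of `ℓ` keeps it below the current maximum for a while, so `h` has
a local maximum there and `h' = 0`. Where `ℓ = h`, the nonnegative function `h - ℓ` has a local
minimum, so `h' = ℓ'`. Either way `h' (h' - ℓ') = 0`, and the integrands
`(h' - ℓ')² + h'²` and `ℓ'²` differ by exactly `2 h' (h' - ℓ')`.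
-/

open MeasureTheory Set Filter Topology

theorem ae_hasDerivAt_of_eq_setIntegral_Ioc {E : Type*} [NormedAddCommGroup E]
    [NormedSpace ℝ E] [CompleteSpace E] {f g : ℝ → E} {a b : ℝ}
    (hg : IntegrableOn g (Icc a b)) (hf : ∀ x ∈ Icc a b, f x = ∫ u in Ioc a x, g u) :
    ∀ᵐ x, x ∈ Ioo a b → HasDerivAt f (g x) x := by
  rcases lt_or_ge b a with hba | hab
  · exact ae_of_all _ fun x hx => absurd (hx.1.trans hx.2) hba.not_gt
  have hgab : IntervalIntegrable g volume a b := by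
    rw [← uIcc_of_le hab] at hg
    exact hg.intervalIntegrable
  filter_upwards [hgab.ae_hasDerivAt_integral] with x hx hxab
  have hxab' : x ∈ uIcc a b := by rw [uIcc_of_le hab]; exact Ioo_subset_Icc_self hxab
  refine (hx hxab' a left_mem_uIcc).congr_of_eventuallyEq ?_
  filter_upwards [Ioo_mem_nhds hxab.1 hxab.2] with y hy
  rw [hf y (Ioo_subset_Icc_self hy), intervalIntegral.integral_of_le hy.1.le]

section RunningMax

variable {l h : ℝ → ℝ} {a b x : ℝ}

theorem le_of_isGreatest_image_Icc (hmax : ∀ x ∈ Icc a b, IsGreatest (l '' Icc a x) (h x))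
    (hx : x ∈ Icc a b) : l x ≤ h x :=
  (hmax x hx).2 ⟨x, ⟨hx.1, le_rfl⟩, rfl⟩

theorem isLocalMax_of_lt_isGreatest_image_Icc
    (hmax : ∀ x ∈ Icc a b, IsGreatest (l '' Icc a x) (h x)) (hx : x ∈ Ioo a b)
    (hl : ContinuousAt l x) (hlt : l x < h x) : IsLocalMax h x := by
  obtain ⟨ε, hε, hball⟩ := Metric.eventually_nhds_iff.1 (hl.eventually (gt_mem_nhds hlt))
  filter_upwards [Metric.ball_mem_nhds x hε, Ioo_mem_nhds hx.1 hx.2] with y hy hyab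
  obtain ⟨c, hc, hcy⟩ := (hmax y (Ioo_subset_Icc_self hyab)).1
  rw [← hcy]
  rcases le_or_gt c x with hcx | hxc
  · exact (hmax x (Ioo_subset_Icc_self hx)).2 ⟨c, ⟨hc.1, hcx⟩, rfl⟩
  · refine (hball ?_).le
    rw [Metric.mem_ball, Real.dist_eq] at hy
    rw [Real.dist_eq, abs_of_pos (sub_pos.2 hxc)]
    linarith [le_abs_self (y - x), hc.2]

theorem eq_zero_or_eq_of_isGreatest_image_Icc
    (hmax : ∀ x ∈ Icc a b, IsGreatest (l '' Icc a x) (h x)) (hx : x ∈ Ioo a b)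
    {h' l' : ℝ} (hh : HasDerivAt h h' x) (hl : HasDerivAt l l' x) :
    h' = 0 ∨ h x = l x ∧ h' = l' := by
  rcases (le_of_isGreatest_image_Icc hmax (Ioo_subset_Icc_self hx)).lt_or_eq with hlt | heq
  · exact .inl <|
      (isLocalMax_of_lt_isGreatest_image_Icc hmax hx hl.continuousAt hlt).hasDerivAt_eq_zero hh
  · refine .inr ⟨heq.symm, sub_eq_zero.1 ?_⟩
    have hmin : IsLocalMin (fun y => h y - l y) x := by
      filter_upwards [Ioo_mem_nhds hx.1 hx.2] with y hy
      rw [heq, sub_self, sub_nonneg]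
      exact le_of_isGreatest_image_Icc hmax (Ioo_subset_Icc_self hy)
    exact hmin.hasDerivAt_eq_zero (hh.sub hl)

end RunningMax

theorem stmt9_general (l l' h h' : ℝ → ℝ)
    (hl'int : IntegrableOn l' (Set.Icc 0 1))
    (hlAC : ∀ x ∈ Set.Icc (0:ℝ) 1, l x = ∫ u in Set.Ioc 0 x, l' u)
    (hmax : ∀ x ∈ Set.Icc (0:ℝ) 1, IsGreatest (l '' Set.Icc 0 x) (h x))
    (hh'int : IntegrableOn h' (Set.Icc 0 1))
    (hhAC : ∀ x ∈ Set.Icc (0:ℝ) 1, h x = ∫ u in Set.Ioc 0 x, h' u) :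
    (∀ᵐ x ∂(volume.restrict (Set.Ioc (0:ℝ) 1)), h' x * (h x - l x) = 0) ∧
    ∫ x in Set.Ioc (0:ℝ) 1, ((h' x - l' x)^2 + (h' x)^2)
      = ∫ x in Set.Ioc (0:ℝ) 1, (l' x)^2 := by
  have hdichotomy :
      ∀ᵐ x ∂(volume.restrict (Ioc (0:ℝ) 1)), h' x = 0 ∨ h x = l x ∧ h' x = l' x := by
    rw [ae_restrict_congr_set Ioo_ae_eq_Ioc.symm, ae_restrict_iff' measurableSet_Ioo]
    filter_upwards [ae_hasDerivAt_of_eq_setIntegral_Ioc hh'int hhAC,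
      ae_hasDerivAt_of_eq_setIntegral_Ioc hl'int hlAC] with x hh hl hx
    exact eq_zero_or_eq_of_isGreatest_image_Icc hmax hx (hh hx) (hl hx)
  refine ⟨hdichotomy.mono fun x hx => ?_, integral_congr_ae (hdichotomy.mono fun x hx => ?_)⟩
  · rcases hx with h0 | ⟨heq, -⟩
    · rw [h0, zero_mul]
    · rw [heq, sub_self, mul_zero]
  · rcases hx with h0 | ⟨-, heq⟩
    · simp only [h0]
      ring
    · simp only [heq, sub_self]
      ring

/-- Let `ℓ` be absolutely continuous on `[0,1]` with `ℓ(0)=0` and let `h` be its running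
maximum, also absolutely continuous with a.e. derivative `h'`. Then `h'(x)(h(x)−ℓ(x)) = 0`
a.e. and `∫₀¹ ((h'−ℓ')² + h'²) = ∫₀¹ ℓ'²`. -/
theorem stmt9 (l l' h h' : ℝ → ℝ)
    (hl0 : l 0 = 0)
    (hl'int : IntegrableOn l' (Set.Icc 0 1))
    (hlAC : ∀ x ∈ Set.Icc (0:ℝ) 1, l x = ∫ u in Set.Ioc 0 x, l' u)
    (hmax : ∀ x ∈ Set.Icc (0:ℝ) 1, IsGreatest (l '' Set.Icc 0 x) (h x))
    (hh'int : IntegrableOn h' (Set.Icc 0 1))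
    (hhAC : ∀ x ∈ Set.Icc (0:ℝ) 1, h x = ∫ u in Set.Ioc 0 x, h' u) :
    (∀ᵐ x ∂(volume.restrict (Set.Ioc (0:ℝ) 1)), h' x * (h x - l x) = 0) ∧
    ∫ x in Set.Ioc (0:ℝ) 1, ((h' x - l' x)^2 + (h' x)^2)
      = ∫ x in Set.Ioc (0:ℝ) 1, (l' x)^2 :=
  stmt9_general l l' h h' hl'int hlAC hmax hh'int hhAC
end
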